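/- There exists a constant A > 0, depending only on Γ, α, ν, u₀, e₀, such that for every c = (c₁, c₂) ∈ ℝ² satisfying c₁ + u₀ + Γ A (|c₂| + 1)/u₀ < 0 and c₂ + e₀ > 0, one has c ∈ 𝒞. In particular, the feasible set 𝒞 is unbounded. -/

import Mathlib

noncomputable section

/-- `(u, e)` solves the profile ODE
`u′ = (u₀/α)(c₁ + u + Γ e/u)`, `e′ = (u₀/ν)(c₂ − c₁ u − u²/2 + e)`
on the set `S`, with initial data `u 0 = u₀`, `e 0 = e₀`. -/
def IsProfileSol (Γ α ν u₀ e₀ : ℝ) (c : ℝ × ℝ) (u e : ℝ → ℝ) (S : Set ℝ) : Prop :=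
  u 0 = u₀ ∧ e 0 = e₀ ∧
  ∀ x ∈ S,
    HasDerivWithinAt u ((u₀ / α) * (c.1 + u x + Γ * e x / u x)) S x ∧
    HasDerivWithinAt e ((u₀ / ν) * (c.2 - c.1 * u x - (u x) ^ 2 / 2 + e x)) S x

/-- The feasible set 𝒞: the set of constants of integration `c` for which the solution of
the profile ODE is defined on `[0,1]` with `u > 0` and `e > 0` on `[0,1]`. -/
def Feasible (Γ α ν u₀ e₀ : ℝ) : Set (ℝ × ℝ) :=
  {c | ∃ u e : ℝ → ℝ,
    IsProfileSol Γ α ν u₀ e₀ c u e (Set.Icc 0 1) ∧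
    ∀ x ∈ Set.Icc (0:ℝ) 1, 0 < u x ∧ 0 < e x}

open Set
open scoped NNReal

/-!
Clamp the state to a box `[ulo, u₀] × [e₀, E]`: the clamped field is globally Lipschitz and
bounded, so Picard–Lindelöf gives a solution on `[0, 1]`. This solution never leaves the box, so
the clamp is inactive and it solves the profile ODE itself. On the faces `u = u₀`, `u = ulo` and
`e = e₀` the field points strictly into the box (this is where `c₁ + u₀ + Γ E / u₀ < 0` and
`c₂ + e₀ > 0` enter), and `e ≤ E` follows from Grönwall's inequality for `e + α u² / (2ν)`, whose
derivative is free of `c₁` and at most linear in itself and in `|c₂|`. Taking `E` affine in `|c₂|`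
gives the constant `A`, and the feasible set then contains a half-line `{(x, 0) | x < x₀}`.
-/

section Prod

variable {E F : Type*} [NormedAddCommGroup E] [NormedSpace ℝ E] [NormedAddCommGroup F]
  [NormedSpace ℝ F] {γ : ℝ → E × F} {v : E × F} {s : Set ℝ} {t : ℝ}

theorem HasDerivWithinAt.fst (h : HasDerivWithinAt γ v s t) :
    HasDerivWithinAt (fun x => (γ x).1) v.1 s t := by
  simpa using h.hasFDerivWithinAt.fst.hasDerivWithinAt

theorem HasDerivWithinAt.snd (h : HasDerivWithinAt γ v s t) :
    HasDerivWithinAt (fun x => (γ x).2) v.2 s t := by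
  simpa using h.hasFDerivWithinAt.snd.hasDerivWithinAt

end Prod

theorem HasDerivWithinAt.Ici_of_Icc {E : Type*} [NormedAddCommGroup E] [NormedSpace ℝ E]
    {f : ℝ → E} {f' : E} {a b x : ℝ} (h : HasDerivWithinAt f f' (Icc a b) x) (hx : x ∈ Ico a b) :
    HasDerivWithinAt f f' (Ici x) x :=
  h.mono_of_mem_nhdsWithin (Icc_mem_nhdsGE_of_mem hx)

theorem image_le_of_deriv_neg_of_eq {f f' : ℝ → ℝ} {a b C : ℝ}
    (hf : ∀ x ∈ Icc a b, HasDerivWithinAt f (f' x) (Icc a b) x) (ha : f a ≤ C)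
    (hC : ∀ x ∈ Ico a b, f x = C → f' x < 0) : ∀ x ∈ Icc a b, f x ≤ C :=
  image_le_of_deriv_right_lt_deriv_boundary' (fun x hx => (hf x hx).continuousWithinAt)
    (fun x hx => (hf x (Ico_subset_Icc_self hx)).Ici_of_Icc hx) (B := fun _ => C) ha
    continuousOn_const (fun _ _ => hasDerivWithinAt_const _ _ _) hC

theorem le_image_of_deriv_pos_of_eq {f f' : ℝ → ℝ} {a b C : ℝ}
    (hf : ∀ x ∈ Icc a b, HasDerivWithinAt f (f' x) (Icc a b) x) (ha : C ≤ f a)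
    (hC : ∀ x ∈ Ico a b, f x = C → 0 < f' x) : ∀ x ∈ Icc a b, C ≤ f x := by
  intro x hx
  have := image_le_of_deriv_neg_of_eq (f := fun x => -f x) (f' := fun x => -f' x) (C := -C)
    (fun x hx => (hf x hx).neg) (neg_le_neg ha)
    (fun x hx hfx => neg_neg_of_pos (hC x hx (neg_inj.mp hfx))) x hx
  exact neg_le_neg_iff.mp this

theorem exists_forall_mem_Icc_hasDerivWithinAt_of_lipschitzWith {E : Type*}
    [NormedAddCommGroup E] [NormedSpace ℝ E] [CompleteSpace E] {G : E → E} {K L : ℝ≥0}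
    (hG : LipschitzWith K G) (hGL : ∀ x, ‖G x‖ ≤ L) (x₀ : E) {T : ℝ} (hT : 0 ≤ T) :
    ∃ γ : ℝ → E, γ 0 = x₀ ∧ ∀ t ∈ Icc 0 T, HasDerivWithinAt γ (G (γ t)) (Icc 0 T) t :=
  IsPicardLindelof.exists_eq_forall_mem_Icc_hasDerivWithinAt₀
    (IsPicardLindelof.of_time_independent (t₀ := ⟨0, left_mem_Icc.2 hT⟩) (a := L * T.toNNReal)
      (fun x _ => hGL x) hG.lipschitzOnWith (by simp [hT]))

theorem gronwallBound_mul_le {δ K ε y x : ℝ} (hδ : 0 ≤ δ) (hK : 0 < K) (hε : 0 ≤ ε) (hy : 0 ≤ y)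
    (hx : 0 ≤ x) : gronwallBound δ K (ε * y) x ≤ gronwallBound δ K ε x * (y + 1) := by
  simp only [gronwallBound_of_K_ne_0 hK.ne']
  have hexp : 1 ≤ Real.exp (K * x) := Real.one_le_exp (by positivity)
  have h₁ : 0 ≤ δ * Real.exp (K * x) * y := by positivity
  have h₂ : 0 ≤ ε / K * (Real.exp (K * x) - 1) := mul_nonneg (by positivity) (by linarith)
  have h₃ : ε * y / K = ε / K * y := by ring
  rw [h₃]
  nlinarith

def boxClamp (lo hi p : ℝ × ℝ) : ℝ × ℝ :=
  (max lo.1 (min p.1 hi.1), max lo.2 (min p.2 hi.2))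

theorem lipschitzWith_boxClamp (lo hi : ℝ × ℝ) : LipschitzWith 1 (boxClamp lo hi) := by
  have h := ((LipschitzWith.prod_fst.min_const hi.1).const_max lo.1).prodMk
    ((LipschitzWith.prod_snd.min_const hi.2).const_max lo.2)
  rwa [max_self] at h

theorem boxClamp_mem {lo hi : ℝ × ℝ} (h : lo ≤ hi) (p : ℝ × ℝ) : boxClamp lo hi p ∈ Icc lo hi :=
  ⟨⟨le_max_left _ _, le_max_left _ _⟩,
    ⟨max_le h.1 (min_le_right _ _), max_le h.2 (min_le_right _ _)⟩⟩

theorem boxClamp_fst {lo hi p : ℝ × ℝ} (h₁ : lo.1 ≤ p.1) (h₂ : p.1 ≤ hi.1) :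
    (boxClamp lo hi p).1 = p.1 := by
  simp [boxClamp, h₁, h₂]

theorem boxClamp_snd {lo hi p : ℝ × ℝ} (h₁ : lo.2 ≤ p.2) (h₂ : p.2 ≤ hi.2) :
    (boxClamp lo hi p).2 = p.2 := by
  simp [boxClamp, h₁, h₂]

theorem boxClamp_of_mem {lo hi p : ℝ × ℝ} (hp : p ∈ Icc lo hi) : boxClamp lo hi p = p :=
  Prod.ext (boxClamp_fst hp.1.1 hp.2.1) (boxClamp_snd hp.1.2 hp.2.2)

theorem exists_forall_mem_Icc_hasDerivWithinAt_comp_boxClamp {F : ℝ × ℝ → ℝ × ℝ}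
    {lo hi : ℝ × ℝ} (hlo : lo ≤ hi) (hF : ContDiffOn ℝ 1 F (Icc lo hi)) (x₀ : ℝ × ℝ) {T : ℝ}
    (hT : 0 ≤ T) : ∃ γ : ℝ → ℝ × ℝ, γ 0 = x₀ ∧
      ∀ t ∈ Icc 0 T, HasDerivWithinAt γ (F (boxClamp lo hi (γ t))) (Icc 0 T) t := by
  obtain ⟨K, hK⟩ := hF.exists_lipschitzOnWith one_ne_zero (convex_Icc lo hi) isCompact_Icc
  obtain ⟨L, hL⟩ := isCompact_Icc.exists_bound_of_continuousOn hF.continuousOn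
  have hlip : LipschitzWith (K * 1) (F ∘ boxClamp lo hi) := by
    rw [← lipschitzOnWith_univ]
    exact hK.comp (lipschitzWith_boxClamp lo hi).lipschitzOnWith fun p _ => boxClamp_mem hlo p
  exact exists_forall_mem_Icc_hasDerivWithinAt_of_lipschitzWith hlip
    (L := L.toNNReal) (fun p => (hL _ (boxClamp_mem hlo p)).trans (Real.le_coe_toNNReal L)) x₀ hT

def profileField (Γ α ν u₀ : ℝ) (c p : ℝ × ℝ) : ℝ × ℝ :=
  (u₀ / α * (c.1 + p.1 + Γ * p.2 / p.1), u₀ / ν * (c.2 - c.1 * p.1 - p.1 ^ 2 / 2 + p.2))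

theorem contDiffOn_profileField (Γ α ν u₀ : ℝ) (c : ℝ × ℝ) {s : Set (ℝ × ℝ)}
    (hs : ∀ p ∈ s, p.1 ≠ 0) : ContDiffOn ℝ 1 (profileField Γ α ν u₀ c) s := by
  unfold profileField
  fun_prop (disch := exact hs _ ‹_›)

def IsClampedProfileCurve (Γ α ν u₀ e₀ ulo E : ℝ) (c : ℝ × ℝ) (γ : ℝ → ℝ × ℝ) : Prop :=
  γ 0 = (u₀, e₀) ∧ ∀ t ∈ Icc (0 : ℝ) 1,
    HasDerivWithinAt γ (profileField Γ α ν u₀ c (boxClamp (ulo, e₀) (u₀, E) (γ t))) (Icc 0 1) t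

namespace IsClampedProfileCurve

variable {Γ α ν u₀ e₀ ulo E : ℝ} {c : ℝ × ℝ} {γ : ℝ → ℝ × ℝ}

theorem fst_le (hγ : IsClampedProfileCurve Γ α ν u₀ e₀ ulo E c γ) (hΓ : 0 ≤ Γ) (hα : 0 < α)
    (hu₀ : 0 < u₀) (hulo : ulo ≤ u₀) (hE : e₀ ≤ E) (hc : c.1 + u₀ + Γ * E / u₀ < 0) :
    ∀ t ∈ Icc (0 : ℝ) 1, (γ t).1 ≤ u₀ := by
  refine image_le_of_deriv_neg_of_eq (fun t ht => (hγ.2 t ht).fst) (by rw [hγ.1])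
    fun t _ ht => ?_
  set q := boxClamp (ulo, e₀) (u₀, E) (γ t)
  have hq : q ∈ Icc (ulo, e₀) (u₀, E) := boxClamp_mem ⟨hulo, hE⟩ (γ t)
  have hq₁ : q.1 = u₀ := by rw [boxClamp_fst] <;> simp [ht, hulo]
  have hΓq : Γ * q.2 / u₀ ≤ Γ * E / u₀ := by gcongr; exact hq.2.2
  change u₀ / α * (c.1 + q.1 + Γ * q.2 / q.1) < 0
  rw [hq₁]
  exact mul_neg_of_pos_of_neg (by positivity) (by linarith)

theorem le_fst (hγ : IsClampedProfileCurve Γ α ν u₀ e₀ ulo E c γ) (hΓ : 0 ≤ Γ) (hα : 0 < α)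
    (hu₀ : 0 < u₀) (hulo₀ : 0 < ulo) (hulo : ulo ≤ u₀) (hE : e₀ ≤ E)
    (hc : 0 < c.1 + ulo + Γ * e₀ / ulo) :
    ∀ t ∈ Icc (0 : ℝ) 1, ulo ≤ (γ t).1 := by
  refine le_image_of_deriv_pos_of_eq (fun t ht => (hγ.2 t ht).fst) (by rwa [hγ.1])
    fun t _ ht => ?_
  set q := boxClamp (ulo, e₀) (u₀, E) (γ t)
  have hq : q ∈ Icc (ulo, e₀) (u₀, E) := boxClamp_mem ⟨hulo, hE⟩ (γ t)
  have hq₁ : q.1 = ulo := by rw [boxClamp_fst] <;> simp [ht, hulo]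
  have hΓq : Γ * e₀ / ulo ≤ Γ * q.2 / ulo := by gcongr; exact hq.1.2
  change 0 < u₀ / α * (c.1 + q.1 + Γ * q.2 / q.1)
  rw [hq₁]
  exact mul_pos (by positivity) (by linarith)

theorem le_snd (hγ : IsClampedProfileCurve Γ α ν u₀ e₀ ulo E c γ) (hν : 0 < ν) (hu₀ : 0 < u₀)
    (hulo₀ : 0 ≤ ulo) (hulo : ulo ≤ u₀) (hE : e₀ ≤ E) (hc₁ : c.1 + u₀ ≤ 0)
    (hc₂ : 0 < c.2 + e₀) :
    ∀ t ∈ Icc (0 : ℝ) 1, e₀ ≤ (γ t).2 := by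
  refine le_image_of_deriv_pos_of_eq (fun t ht => (hγ.2 t ht).snd) (by rw [hγ.1])
    fun t _ ht => ?_
  set q := boxClamp (ulo, e₀) (u₀, E) (γ t)
  have hq : q ∈ Icc (ulo, e₀) (u₀, E) := boxClamp_mem ⟨hulo, hE⟩ (γ t)
  have hq₂ : q.2 = e₀ := by rw [boxClamp_snd] <;> simp [ht, hE]
  have hq₁ : 0 ≤ q.1 * (-c.1 - q.1) := mul_nonneg (hulo₀.trans hq.1.1) (by linarith [hq.2.1])
  change 0 < u₀ / ν * (c.2 - c.1 * q.1 - q.1 ^ 2 / 2 + q.2)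
  rw [hq₂]
  exact mul_pos (by positivity) (by nlinarith)

theorem snd_le_gronwallBound (hγ : IsClampedProfileCurve Γ α ν u₀ e₀ ulo E c γ) (hΓ : 0 ≤ Γ)
    (hα : 0 < α) (hν : 0 < ν) (hu₀ : 0 < u₀) (he₀ : 0 < e₀) (hulo₀ : 0 < ulo)
    (hU : ∀ t ∈ Icc (0 : ℝ) 1, (γ t).1 ∈ Icc ulo u₀) (hV : ∀ t ∈ Icc (0 : ℝ) 1, e₀ ≤ (γ t).2) :
    ∀ t ∈ Icc (0 : ℝ) 1, (γ t).2 ≤ gronwallBound (e₀ + α / (2 * ν) * u₀ ^ 2)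
      ((1 + Γ) * (u₀ / ν) + u₀ / α) (u₀ / ν * |c.2|) 1 := by
  set w : ℝ → ℝ := fun t => (γ t).2 + α / (2 * ν) * (γ t).1 ^ 2
  set q : ℝ → ℝ × ℝ := fun t => boxClamp (ulo, e₀) (u₀, E) (γ t)
  have hw : ∀ t ∈ Ico (0 : ℝ) 1, HasDerivWithinAt w
      (u₀ / ν * (c.2 + (γ t).1 ^ 2 / 2 + (1 + Γ) * (q t).2)) (Ici t) t := by
    intro t ht
    have hUt := hU t (Ico_subset_Icc_self ht)
    have hq₁ : (q t).1 = (γ t).1 := boxClamp_fst hUt.1 hUt.2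
    have hU₀ : (γ t).1 ≠ 0 := (hulo₀.trans_le hUt.1).ne'
    have h := hγ.2 t (Ico_subset_Icc_self ht)
    refine ((h.snd.add ((h.fst.pow 2).const_mul (α / (2 * ν)))).Ici_of_Icc ht).congr_deriv ?_
    simp only [profileField, hq₁, q]
    field_simp
    ring
  have hw_cont : ContinuousOn w (Icc 0 1) := fun t ht =>
    ((hγ.2 t ht).snd.add (((hγ.2 t ht).fst.pow 2).const_mul _)).continuousWithinAt
  have hbound : ∀ t ∈ Ico (0 : ℝ) 1, u₀ / ν * (c.2 + (γ t).1 ^ 2 / 2 + (1 + Γ) * (q t).2) ≤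
      ((1 + Γ) * (u₀ / ν) + u₀ / α) * w t + u₀ / ν * |c.2| := by
    intro t ht
    have hVt := hV t (Ico_subset_Icc_self ht)
    have h₁ : 0 ≤ u₀ / ν * (|c.2| - c.2) :=
      mul_nonneg (by positivity) (sub_nonneg.2 (le_abs_self c.2))
    have h₂ : 0 ≤ (1 + Γ) * (u₀ / ν) * ((γ t).2 - (q t).2) :=
      mul_nonneg (by positivity) (sub_nonneg.2 (max_le hVt (min_le_left _ _)))
    have h₃ : 0 ≤ u₀ / α * (γ t).2 := mul_nonneg (by positivity) (he₀.le.trans hVt)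
    have h₄ : 0 ≤ (1 + Γ) * (u₀ / ν) * (α / (2 * ν)) * (γ t).1 ^ 2 := by positivity
    have hk : u₀ / α * (α / (2 * ν)) * (γ t).1 ^ 2 = u₀ / ν / 2 * (γ t).1 ^ 2 := by field_simp
    simp only [w]
    linarith
  have hgr := le_gronwallBound_of_liminf_deriv_right_le hw_cont
    (fun t ht _ hr => (hw t ht).liminf_right_slope_le hr)
    (δ := e₀ + α / (2 * ν) * u₀ ^ 2) (by simp [w, hγ.1]) hbound
  intro t ht
  calc (γ t).2 ≤ w t := le_add_of_nonneg_right (by positivity)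
    _ ≤ _ := hgr t ht
    _ ≤ _ := gronwallBound_mono (by positivity) (by positivity) (by positivity) (by linarith [ht.2])

end IsClampedProfileCurve

theorem mem_feasible_of_gronwallBound_le {Γ α ν u₀ e₀ E : ℝ} {c : ℝ × ℝ} (hΓ : 0 < Γ)
    (hα : 0 < α) (hν : 0 < ν) (hu₀ : 0 < u₀) (he₀ : 0 < e₀)
    (hE : gronwallBound (e₀ + α / (2 * ν) * u₀ ^ 2) ((1 + Γ) * (u₀ / ν) + u₀ / α)
      (u₀ / ν * |c.2|) 1 ≤ E)
    (hc₁ : c.1 + u₀ + Γ * E / u₀ < 0) (hc₂ : 0 < c.2 + e₀) : c ∈ Feasible Γ α ν u₀ e₀ := by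
  have he₀E : e₀ ≤ E := calc
    e₀ ≤ e₀ + α / (2 * ν) * u₀ ^ 2 := le_add_of_nonneg_right (by positivity)
    _ = gronwallBound _ ((1 + Γ) * (u₀ / ν) + u₀ / α) (u₀ / ν * |c.2|) 0 :=
      (gronwallBound_x0 _ _ _).symm
    _ ≤ _ := gronwallBound_mono (by positivity) (by positivity) (by positivity) zero_le_one
    _ ≤ E := hE
  have hΓE : Γ * e₀ / u₀ ≤ Γ * E / u₀ := by gcongr
  have hΓe₀ : 0 < Γ * e₀ / u₀ := by positivity
  have h1c : 0 < 1 - c.1 := by linarith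
  set ulo := Γ * e₀ / (1 - c.1)
  have hulo₀ : 0 < ulo := by positivity
  have hulo : ulo ≤ u₀ := by
    rw [div_le_iff₀ h1c, ← div_le_iff₀' hu₀]
    linarith
  have hlow : 0 < c.1 + ulo + Γ * e₀ / ulo := by
    have : Γ * e₀ / ulo = 1 - c.1 := by simp only [ulo]; field_simp
    linarith
  obtain ⟨γ, hγ0, hγ⟩ := exists_forall_mem_Icc_hasDerivWithinAt_comp_boxClamp
    (F := profileField Γ α ν u₀ c) (lo := (ulo, e₀)) (hi := (u₀, E)) ⟨hulo, he₀E⟩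
    (contDiffOn_profileField Γ α ν u₀ c fun p hp => (hulo₀.trans_le hp.1.1).ne') (u₀, e₀)
    zero_le_one
  have hγc : IsClampedProfileCurve Γ α ν u₀ e₀ ulo E c γ := ⟨hγ0, hγ⟩
  have hU₁ := hγc.fst_le hΓ.le hα hu₀ hulo he₀E hc₁
  have hU₂ := hγc.le_fst hΓ.le hα hu₀ hulo₀ hulo he₀E hlow
  have hV₁ := hγc.le_snd hν hu₀ hulo₀.le hulo he₀E (by linarith) hc₂
  have hV₂ := hγc.snd_le_gronwallBound hΓ.le hα hν hu₀ he₀ hulo₀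
    (fun t ht => ⟨hU₂ t ht, hU₁ t ht⟩) hV₁
  refine ⟨fun t => (γ t).1, fun t => (γ t).2, ⟨by simp [hγ0], by simp [hγ0], fun t ht => ?_⟩,
    fun t ht => ⟨hulo₀.trans_le (hU₂ t ht), he₀.trans_le (hV₁ t ht)⟩⟩
  have h := hγ t ht
  rw [boxClamp_of_mem ⟨⟨hU₂ t ht, hV₁ t ht⟩, ⟨hU₁ t ht, (hV₂ t ht).trans hE⟩⟩] at h
  exact ⟨h.fst, h.snd⟩

/-- Lemma (C_unbounded): there is `A > 0` depending only on `Γ, α, ν, u₀, e₀` such that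
`c₁ + u₀ + Γ A (|c₂|+1)/u₀ < 0` and `c₂ + e₀ > 0` imply `c ∈ 𝒞`.
In particular 𝒞 is unbounded. -/
theorem stmt8 (Γ α ν u₀ e₀ : ℝ) (hΓ : 0 < Γ) (hα : 0 < α) (hν : 0 < ν)
    (hu₀ : 0 < u₀) (he₀ : 0 < e₀) :
    (∃ A > (0:ℝ), ∀ c : ℝ × ℝ,
      c.1 + u₀ + Γ * A * (|c.2| + 1) / u₀ < 0 → 0 < c.2 + e₀ →
      c ∈ Feasible Γ α ν u₀ e₀) ∧
    ¬ Bornology.IsBounded (Feasible Γ α ν u₀ e₀) := by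
  set δ := e₀ + α / (2 * ν) * u₀ ^ 2
  set K := (1 + Γ) * (u₀ / ν) + u₀ / α
  set A := gronwallBound δ K (u₀ / ν) 1
  have hA : 0 < A := calc
    0 < δ := by positivity
    _ = gronwallBound δ K (u₀ / ν) 0 := (gronwallBound_x0 _ _ _).symm
    _ ≤ A := gronwallBound_mono (by positivity) (by positivity) (by positivity) zero_le_one
  have hmem (c : ℝ × ℝ) (hc₁ : c.1 + u₀ + Γ * A * (|c.2| + 1) / u₀ < 0) (hc₂ : 0 < c.2 + e₀) :
      c ∈ Feasible Γ α ν u₀ e₀ :=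
    mem_feasible_of_gronwallBound_le hΓ hα hν hu₀ he₀
      (gronwallBound_mul_le (by positivity) (by positivity) (by positivity) (abs_nonneg _)
        zero_le_one)
      (by rwa [← mul_assoc]) hc₂
  refine ⟨⟨A, hA, hmem⟩, fun hbdd => not_bddBelow_Iio (-(u₀ + Γ * A / u₀)) ?_⟩
  refine (hbdd.image_fst.subset fun x hx =>
    ⟨(x, 0), hmem _ ?_ (by simpa using he₀), rfl⟩).bddBelow
  simp only [abs_zero, zero_add, mul_one]
  linarith [mem_Iio.1 hx]
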